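/- arXiv:2503.04415 — 4 statements merged into one kernel-verified Lean document; each statement's English description precedes it below -/
import Mathlib

section
/- Let N ≥ 1, γ ∈ (0,1) with Nγ < 1 < (N+1)γ, let 0 ≤ σ < γ and (σ + Nγ)/(N+1) < p < γ. Set P_N = (N+1)p - Nγ - σ. Then for every 0 ≤ l ≤ N and every ε with 0 < ε < min{ P_N/(1-(N+1)(γ-p)), ((N+1)γ - 1)/(1-(N+1)(γ-p)) }, the dyadic series ∑_{m ≥ 1} ( ∑_{n=0}^{2^{m-1}-1} (1/2^m)^{(N+1)p/(1-(N+1)(γ-p))} (1 - n/2^{m-1})^{((l-N)γ - σ)/(1-(N+1)(γ-p))} )^{1-(N+1)(γ-p)} is finite. -/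
set_option maxHeartbeats 1000000 in
/-- The key dyadic summability estimate in the sewing lemma for `(p,γ)`-rough paths:
under `Nγ < 1 < (N+1)γ`, `0 ≤ σ < γ`, `(σ+Nγ)/(N+1) < p < γ`, `0 ≤ l ≤ N`, and
`0 < ε < min{P_N/(1-(N+1)(γ-p)), ((N+1)γ-1)/(1-(N+1)(γ-p))}` with
`P_N = (N+1)p - Nγ - σ`, the series (indexed by `m ≥ 1`, written via `m+1`)
`∑_{m ≥ 1} (∑_{n=0}^{2^{m-1}-1} (1/2^m)^{(N+1)p/(1-(N+1)(γ-p))}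
  (1 - n/2^{m-1})^{((l-N)γ-σ)/(1-(N+1)(γ-p))})^{1-(N+1)(γ-p)}` converges. -/
theorem dyadic_sewing_summable (N l : ℕ) (γ σ p ε : ℝ)
    (hN : 1 ≤ N) (hγ0 : 0 < γ) (hγ1 : γ < 1)
    (hNγ : (N : ℝ) * γ < 1) (hN1γ : 1 < ((N : ℝ) + 1) * γ)
    (hσ0 : 0 ≤ σ) (hσγ : σ < γ)
    (hplow : (σ + (N : ℝ) * γ) / ((N : ℝ) + 1) < p) (hpγ : p < γ)
    (hl : l ≤ N)
    (hε0 : 0 < ε)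
    (hε : ε < min ((((N : ℝ) + 1) * p - (N : ℝ) * γ - σ) / (1 - ((N : ℝ) + 1) * (γ - p)))
        ((((N : ℝ) + 1) * γ - 1) / (1 - ((N : ℝ) + 1) * (γ - p)))) :
    Summable (fun m : ℕ =>
      (∑ n ∈ Finset.range (2 ^ m),
          ((1 : ℝ) / 2 ^ (m + 1)) ^ ((((N : ℝ) + 1) * p) / (1 - ((N : ℝ) + 1) * (γ - p))) *
            (1 - (n : ℝ) / 2 ^ m) ^
              ((((l : ℝ) - (N : ℝ)) * γ - σ) / (1 - ((N : ℝ) + 1) * (γ - p)))) ^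
        (1 - ((N : ℝ) + 1) * (γ - p))) := by
  have hN1 : (0:ℝ) < (N : ℝ) + 1 := by positivity
  have hplow' : σ + (N : ℝ) * γ < ((N : ℝ) + 1) * p := by
    rw [div_lt_iff₀ hN1] at hplow; linarith
  set D : ℝ := 1 - ((N : ℝ) + 1) * (γ - p) with hDdef
  have hD : 0 < D := by nlinarith
  set α : ℝ := (((l : ℝ) - (N : ℝ)) * γ - σ) / D with hαdef
  set q : ℝ := (((N : ℝ) + 1) * p) / D with hqdef
  set β : ℝ := max 0 (α + 1 + ε) with hβdef
  have hβ0 : 0 ≤ β := le_max_left _ _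
  have hαD : α * D = ((l : ℝ) - (N : ℝ)) * γ - σ := div_mul_cancel₀ _ hD.ne'
  have hqD : q * D = ((N : ℝ) + 1) * p := div_mul_cancel₀ _ hD.ne'
  have hp0 : 0 < p := by nlinarith [mul_nonneg (Nat.cast_nonneg N : (0:ℝ) ≤ N) hγ0.le]
  have hε2 : ε * D < ((N : ℝ) + 1) * γ - 1 := by
    have h := (lt_min_iff.mp hε).2
    rw [lt_div_iff₀ hD] at h; linarith
  set e : ℝ := -(((N : ℝ) + 1) * p) + (β - α) * D with hedef
  have hlR : (0:ℝ) ≤ (l : ℝ) := Nat.cast_nonneg l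
  have he : e < 0 := by
    rcases le_or_gt (α + 1 + ε) 0 with h | h
    · have hb : β = 0 := max_eq_left h
      rw [hedef, hb]
      have : (0 - α) * D = -(((l : ℝ) - (N : ℝ)) * γ - σ) := by
        rw [sub_mul, zero_mul, ← hαD]; ring
      rw [this]
      nlinarith [mul_nonneg hlR hγ0.le]
    · have hb : β = α + 1 + ε := max_eq_right h.le
      rw [hedef, hb]
      have : (α + 1 + ε - α) * D = D + ε * D := by ring
      rw [this]
      linarith
  -- the comparison constant
  set C : ℝ := ∑' k : ℕ, ((k : ℝ) + 1) ^ (-1 - ε) with hCdef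
  have hCsum : Summable (fun k : ℕ => ((k : ℝ) + 1) ^ (-1 - ε)) := by
    have h1 : Summable (fun k : ℕ => (k : ℝ) ^ (-1 - ε)) :=
      Real.summable_nat_rpow.2 (by linarith)
    have h2 := (summable_nat_add_iff 1).2 h1
    refine h2.congr fun k => ?_
    push_cast; ring_nf
  have hC0 : 0 ≤ C := tsum_nonneg fun k => Real.rpow_nonneg (by positivity) _
  -- the key per-m estimate
  have key : ∀ m : ℕ,
      (∑ n ∈ Finset.range (2 ^ m),
          ((1 : ℝ) / 2 ^ (m + 1)) ^ q * (1 - (n : ℝ) / 2 ^ m) ^ α) ^ D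
        ≤ C ^ D * ((2 : ℝ) ^ e) ^ m := by
    intro m
    have hKpos : (0:ℝ) < 2 ^ m := by positivity
    have hK1 : (1:ℝ) ≤ 2 ^ m := one_le_pow₀ one_le_two
    -- termwise bound inside the sum
    have hterm : ∀ n ∈ Finset.range (2 ^ m),
        (1 - (n : ℝ) / 2 ^ m) ^ α
          ≤ ((2:ℝ) ^ m) ^ (β - α) * ((2 ^ m - n : ℕ) : ℝ) ^ (-1 - ε) := by
      intro n hn
      rw [Finset.mem_range] at hn
      have hcast : ((2 ^ m - n : ℕ) : ℝ) = (2:ℝ) ^ m - n := by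
        push_cast [Nat.cast_sub hn.le]; ring
      have hkpos : (0:ℝ) < ((2 ^ m - n : ℕ) : ℝ) := by
        have : 0 < 2 ^ m - n := by omega
        exact_mod_cast this
      have hk1 : (1:ℝ) ≤ ((2 ^ m - n : ℕ) : ℝ) := by
        have : 1 ≤ 2 ^ m - n := by omega
        exact_mod_cast this
      have hkK : ((2 ^ m - n : ℕ) : ℝ) ≤ (2:ℝ) ^ m := by
        rw [hcast]
        have : (0:ℝ) ≤ n := Nat.cast_nonneg n
        linarith
      have h1 : (1:ℝ) - (n : ℝ) / 2 ^ m = ((2 ^ m - n : ℕ) : ℝ) / 2 ^ m := by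
        rw [hcast]; field_simp
      rw [h1, Real.div_rpow hkpos.le hKpos.le, div_eq_mul_inv,
        ← Real.rpow_neg hKpos.le]
      have hka : ((2 ^ m - n : ℕ) : ℝ) ^ α
          = ((2 ^ m - n : ℕ) : ℝ) ^ (α + 1 + ε) * ((2 ^ m - n : ℕ) : ℝ) ^ (-1 - ε) := by
        rw [← Real.rpow_add hkpos]; congr 1; ring
      have hup : ((2 ^ m - n : ℕ) : ℝ) ^ (α + 1 + ε) ≤ ((2:ℝ) ^ m) ^ β := by
        rcases le_or_gt (α + 1 + ε) 0 with h | h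
        · calc ((2 ^ m - n : ℕ) : ℝ) ^ (α + 1 + ε) ≤ 1 :=
                Real.rpow_le_one_of_one_le_of_nonpos hk1 h
            _ ≤ ((2:ℝ) ^ m) ^ β := Real.one_le_rpow hK1 hβ0
        · rw [hβdef, max_eq_right h.le]
          exact Real.rpow_le_rpow hkpos.le hkK h.le
      have hsplit : ((2:ℝ) ^ m) ^ (β - α) = ((2:ℝ) ^ m) ^ β * ((2:ℝ) ^ m) ^ (-α) := by
        rw [← Real.rpow_add hKpos, sub_eq_add_neg]
      rw [hka, hsplit]
      calc ((2 ^ m - n : ℕ) : ℝ) ^ (α + 1 + ε) * ((2 ^ m - n : ℕ) : ℝ) ^ (-1 - ε)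
            * ((2:ℝ) ^ m) ^ (-α)
          ≤ ((2:ℝ) ^ m) ^ β * ((2 ^ m - n : ℕ) : ℝ) ^ (-1 - ε) * ((2:ℝ) ^ m) ^ (-α) := by
            exact mul_le_mul_of_nonneg_right
              (mul_le_mul_of_nonneg_right hup (Real.rpow_nonneg hkpos.le _))
              (Real.rpow_nonneg hKpos.le _)
        _ = ((2:ℝ) ^ m) ^ β * ((2:ℝ) ^ m) ^ (-α) * ((2 ^ m - n : ℕ) : ℝ) ^ (-1 - ε) := by
            ring
    -- reflect the sum
    have hreflect : ∑ n ∈ Finset.range (2 ^ m), ((2 ^ m - n : ℕ) : ℝ) ^ (-1 - ε)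
        = ∑ j ∈ Finset.range (2 ^ m), ((j : ℝ) + 1) ^ (-1 - ε) := by
      rw [← Finset.sum_range_reflect (fun j => ((j : ℝ) + 1) ^ (-1 - ε)) (2 ^ m)]
      refine Finset.sum_congr rfl fun n hn => ?_
      rw [Finset.mem_range] at hn
      have h : ((2 ^ m - 1 - n : ℕ) : ℝ) + 1 = ((2 ^ m - n : ℕ) : ℝ) := by
        have : 2 ^ m - 1 - n + 1 = 2 ^ m - n := by omega
        exact_mod_cast congrArg (Nat.cast : ℕ → ℝ) this
      rw [h]
    have hsum : (∑ n ∈ Finset.range (2 ^ m),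
          ((1 : ℝ) / 2 ^ (m + 1)) ^ q * (1 - (n : ℝ) / 2 ^ m) ^ α)
        ≤ ((1 : ℝ) / 2 ^ (m + 1)) ^ q * (((2:ℝ) ^ m) ^ (β - α) * C) := by
      rw [← Finset.mul_sum]
      refine mul_le_mul_of_nonneg_left ?_ (Real.rpow_nonneg (by positivity) _)
      calc ∑ n ∈ Finset.range (2 ^ m), (1 - (n : ℝ) / 2 ^ m) ^ α
          ≤ ∑ n ∈ Finset.range (2 ^ m),
              ((2:ℝ) ^ m) ^ (β - α) * ((2 ^ m - n : ℕ) : ℝ) ^ (-1 - ε) :=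
            Finset.sum_le_sum hterm
        _ = ((2:ℝ) ^ m) ^ (β - α)
              * ∑ n ∈ Finset.range (2 ^ m), ((2 ^ m - n : ℕ) : ℝ) ^ (-1 - ε) := by
            rw [Finset.mul_sum]
        _ = ((2:ℝ) ^ m) ^ (β - α)
              * ∑ j ∈ Finset.range (2 ^ m), ((j : ℝ) + 1) ^ (-1 - ε) := by rw [hreflect]
        _ ≤ ((2:ℝ) ^ m) ^ (β - α) * C := by
            refine mul_le_mul_of_nonneg_left ?_ (Real.rpow_nonneg hKpos.le _)
            exact Summable.sum_le_tsum _ (fun k _ => Real.rpow_nonneg (by positivity) _) hCsum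
    have hsum0 : (0:ℝ) ≤ ∑ n ∈ Finset.range (2 ^ m),
        ((1 : ℝ) / 2 ^ (m + 1)) ^ q * (1 - (n : ℝ) / 2 ^ m) ^ α := by
      refine Finset.sum_nonneg fun n hn => ?_
      have h1 : (0:ℝ) ≤ 1 - (n : ℝ) / 2 ^ m := by
        rw [Finset.mem_range] at hn
        have : (n : ℝ) < 2 ^ m := by exact_mod_cast hn
        rw [sub_nonneg, div_le_one hKpos]
        linarith
      exact mul_nonneg (Real.rpow_nonneg (by positivity) _) (Real.rpow_nonneg h1 _)
    have step1 := Real.rpow_le_rpow hsum0 hsum hD.le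
    refine step1.trans ?_
    -- now pure rpow algebra
    have h2pos : (0:ℝ) < 2 := two_pos
    have e1 : ((1 : ℝ) / 2 ^ (m + 1)) = (2:ℝ) ^ (-((m:ℝ) + 1)) := by
      rw [Real.rpow_neg h2pos.le, ← Real.rpow_natCast (2:ℝ) (m+1)]
      push_cast; rw [one_div]
    have e2 : ((2:ℝ) ^ m) = (2:ℝ) ^ (m:ℝ) := by
      rw [Real.rpow_natCast]
    rw [e1, e2, ← Real.rpow_mul h2pos.le, ← Real.rpow_mul h2pos.le,
      Real.mul_rpow (Real.rpow_nonneg h2pos.le _)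
        (mul_nonneg (Real.rpow_nonneg h2pos.le _) hC0),
      Real.mul_rpow (Real.rpow_nonneg h2pos.le _) hC0,
      ← Real.rpow_mul h2pos.le, ← Real.rpow_mul h2pos.le]
    have hq1 : -((m:ℝ) + 1) * q * D = -((m:ℝ) + 1) * (((N : ℝ) + 1) * p) := by
      rw [mul_assoc, hqD]
    have hb1 : (m:ℝ) * (β - α) * D = (m:ℝ) * ((β - α) * D) := by ring
    rw [hq1, hb1]
    have hstep : (2:ℝ) ^ (-((m:ℝ) + 1) * (((N : ℝ) + 1) * p))
        ≤ (2:ℝ) ^ (-((m:ℝ)) * (((N : ℝ) + 1) * p)) := by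
      apply Real.rpow_le_rpow_of_exponent_le one_le_two
      have hm0 : (0:ℝ) ≤ (m:ℝ) := Nat.cast_nonneg m
      nlinarith
    calc (2:ℝ) ^ (-((m:ℝ) + 1) * (((N : ℝ) + 1) * p))
          * ((2:ℝ) ^ ((m:ℝ) * ((β - α) * D)) * C ^ D)
        ≤ (2:ℝ) ^ (-((m:ℝ)) * (((N : ℝ) + 1) * p))
          * ((2:ℝ) ^ ((m:ℝ) * ((β - α) * D)) * C ^ D) := by
          refine mul_le_mul_of_nonneg_right hstep ?_
          exact mul_nonneg (Real.rpow_nonneg h2pos.le _) (Real.rpow_nonneg hC0 _)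
      _ = C ^ D * (2:ℝ) ^ ((m:ℝ) * e) := by
          rw [← mul_assoc, ← Real.rpow_add h2pos, mul_comm]
          congr 1
          rw [hedef]; ring
      _ = C ^ D * ((2:ℝ) ^ e) ^ m := by
          rw [← Real.rpow_natCast ((2:ℝ) ^ e) m, ← Real.rpow_mul h2pos.le, mul_comm e]
  -- conclude by comparison with a geometric series
  have hr0 : (0:ℝ) ≤ (2:ℝ) ^ e := Real.rpow_nonneg (by norm_num) _
  have hr1 : (2:ℝ) ^ e < 1 := Real.rpow_lt_one_of_one_lt_of_neg one_lt_two he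
  have hgeom : Summable (fun m : ℕ => C ^ D * ((2:ℝ) ^ e) ^ m) :=
    (summable_geometric_of_lt_one hr0 hr1).mul_left _
  refine Summable.of_nonneg_of_le (fun m => ?_) (fun m => key m) hgeom
  refine Real.rpow_nonneg ?_ _
  refine Finset.sum_nonneg fun n hn => ?_
  have hKpos : (0:ℝ) < 2 ^ m := by positivity
  have h1 : (0:ℝ) ≤ 1 - (n : ℝ) / 2 ^ m := by
    rw [Finset.mem_range] at hn
    have : (n : ℝ) < 2 ^ m := by exact_mod_cast hn
    rw [sub_nonneg, div_le_one hKpos]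
    linarith
  exact mul_nonneg (Real.rpow_nonneg (by positivity) _) (Real.rpow_nonneg h1 _)
end

section
/- Let γ' > γ > p ≥ 0 with γ + γ' > 1, and let X be γ-regular and h be γ'-regular in the sense of finite partition-controls W_{X,γ,p} and W_{h,γ',p}. Then the first-level control of the sum satisfies W_{X+h, γ, p}(s,t) ≲ W_{X,γ,p}(s,t) + W_{h,γ',p}(s,t)^{(γ'-p)/(γ-p)} for every subinterval [s,t] ⊆ [0,T]. -/
open scoped ENNReal

/-- The partition sum `∑_k |g(τ_k, τ_{k+1})|^e / (τ_{k+1} - τ_k)^q`. -/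
noncomputable def pSum (g : ℝ → ℝ → ℝ) (e q : ℝ) (m : ℕ) (τ : ℕ → ℝ) : ℝ :=
  ∑ k ∈ Finset.range m, |g (τ k) (τ (k + 1))| ^ e / (τ (k + 1) - τ k) ^ q

/-- The partition-supremum control of a two-parameter function `g` over `[s,t]`. -/
noncomputable def pCtrl (g : ℝ → ℝ → ℝ) (e q s t : ℝ) : ℝ≥0∞ :=
  ⨆ (m : ℕ) (τ : ℕ → ℝ)
    (_ : τ 0 = s ∧ τ m = t ∧ ∀ k < m, τ k < τ (k + 1)),
    ENNReal.ofReal (pSum g e q m τ)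

/-!
On a fixed partition, the triangle inequality and `(a + b)^e ≤ 2^e (a^e + b^e)` bound the
`γ`-sum of `X + h` by `2^e` times the `γ`-sums of `X` and of `h`. With `α = (γ' - p)/(γ - p) ≥ 1`,
each term of the `γ`-sum of `h` is the `α`-th power of the corresponding term of its `γ'`-sum,
and `∑ x_k^α ≤ (∑ x_k)^α` for `x_k ≥ 0` (the embedding `ℓ¹ ⊆ ℓ^α`). Taking suprema over
partitions gives the bound with `C = 2^{1/(γ-p)}`.
-/

lemma Real.add_rpow_le_two_rpow_mul_rpow_add_rpow {a b p : ℝ} (ha : 0 ≤ a) (hb : 0 ≤ b)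
    (hp : 0 ≤ p) : (a + b) ^ p ≤ 2 ^ p * (a ^ p + b ^ p) := calc
  (a + b) ^ p ≤ (2 * max a b) ^ p := by gcongr; rw [two_mul]; gcongr <;> simp
  _ = 2 ^ p * max a b ^ p := Real.mul_rpow zero_le_two (ha.trans (le_max_left a b))
  _ ≤ 2 ^ p * (a ^ p + b ^ p) := by
    gcongr
    rcases le_total a b with hab | hab <;> simp [hab, Real.rpow_nonneg, ha, hb]

lemma Finset.sum_rpow_le_rpow_sum {ι : Type*} (s : Finset ι) {f : ι → ℝ} {p : ℝ}
    (hf : ∀ i ∈ s, 0 ≤ f i) (hp : 1 ≤ p) : ∑ i ∈ s, f i ^ p ≤ (∑ i ∈ s, f i) ^ p := by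
  classical
  induction s using Finset.induction_on with
  | empty => simp [Real.zero_rpow (by linarith : p ≠ 0)]
  | insert i s hi ih =>
    rw [sum_insert hi, sum_insert hi]
    have hs := fun j hj => hf j (mem_insert_of_mem hj)
    calc f i ^ p + ∑ j ∈ s, f j ^ p ≤ f i ^ p + (∑ j ∈ s, f j) ^ p := by gcongr; exact ih hs
      _ ≤ (f i + ∑ j ∈ s, f j) ^ p :=
        Real.add_rpow_le_rpow_add (hf i (mem_insert_self i s)) (sum_nonneg hs) hp

section PartitionSums

variable {g : ℝ → ℝ → ℝ} {e q : ℝ} {m : ℕ} {τ : ℕ → ℝ}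

lemma pSum_nonneg (hτ : ∀ k < m, τ k ≤ τ (k + 1)) : 0 ≤ pSum g e q m τ :=
  Finset.sum_nonneg fun k hk =>
    div_nonneg (Real.rpow_nonneg (abs_nonneg _) e)
      (Real.rpow_nonneg (sub_nonneg.mpr (hτ k (Finset.mem_range.mp hk))) q)

lemma pSum_le_two_rpow_mul_add {g₁ g₂ : ℝ → ℝ → ℝ} (hg : ∀ u v, |g u v| ≤ |g₁ u v| + |g₂ u v|)
    (he : 0 ≤ e) (hτ : ∀ k < m, τ k ≤ τ (k + 1)) :
    pSum g e q m τ ≤ 2 ^ e * (pSum g₁ e q m τ + pSum g₂ e q m τ) := by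
  rw [pSum, pSum, pSum, ← Finset.sum_add_distrib, Finset.mul_sum]
  refine Finset.sum_le_sum fun k hk => ?_
  have hΔ : 0 ≤ (τ (k + 1) - τ k) ^ q :=
    Real.rpow_nonneg (sub_nonneg.mpr (hτ k (Finset.mem_range.mp hk))) q
  rw [← add_div, ← mul_div_assoc]
  gcongr
  calc |g (τ k) (τ (k + 1))| ^ e ≤ (|g₁ (τ k) (τ (k + 1))| + |g₂ (τ k) (τ (k + 1))|) ^ e := by
        gcongr; exact hg _ _
    _ ≤ _ := Real.add_rpow_le_two_rpow_mul_rpow_add_rpow (abs_nonneg _) (abs_nonneg _) he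

lemma pSum_mul_le_rpow {α : ℝ} (hα : 1 ≤ α) (hτ : ∀ k < m, τ k ≤ τ (k + 1)) :
    pSum g (e * α) (q * α) m τ ≤ pSum g e q m τ ^ α := by
  have hΔ : ∀ k ∈ Finset.range m, 0 ≤ τ (k + 1) - τ k :=
    fun k hk => sub_nonneg.mpr (hτ k (Finset.mem_range.mp hk))
  calc pSum g (e * α) (q * α) m τ
      = ∑ k ∈ Finset.range m, (|g (τ k) (τ (k + 1))| ^ e / (τ (k + 1) - τ k) ^ q) ^ α := by
        refine Finset.sum_congr rfl fun k hk => ?_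
        rw [Real.div_rpow (Real.rpow_nonneg (abs_nonneg _) _) (Real.rpow_nonneg (hΔ k hk) _),
          ← Real.rpow_mul (abs_nonneg _), ← Real.rpow_mul (hΔ k hk)]
    _ ≤ pSum g e q m τ ^ α := Finset.sum_rpow_le_rpow_sum _ (fun k hk =>
        div_nonneg (Real.rpow_nonneg (abs_nonneg _) e) (Real.rpow_nonneg (hΔ k hk) q)) hα

end PartitionSums

section Controls

variable {g : ℝ → ℝ → ℝ} {e q s t : ℝ}

lemma ofReal_pSum_le_pCtrl {m : ℕ} {τ : ℕ → ℝ}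
    (hτ : τ 0 = s ∧ τ m = t ∧ ∀ k < m, τ k < τ (k + 1)) :
    ENNReal.ofReal (pSum g e q m τ) ≤ pCtrl g e q s t :=
  le_iSup₂_of_le m τ (le_iSup_of_le hτ le_rfl)

lemma pCtrl_le_two_rpow_mul_add {g₁ g₂ : ℝ → ℝ → ℝ}
    (hg : ∀ u v, |g u v| ≤ |g₁ u v| + |g₂ u v|) (he : 0 ≤ e) :
    pCtrl g e q s t ≤ ENNReal.ofReal (2 ^ e) * (pCtrl g₁ e q s t + pCtrl g₂ e q s t) := by
  refine iSup₂_le fun m τ => iSup_le fun hτ => ?_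
  have hmono : ∀ k < m, τ k ≤ τ (k + 1) := fun k hk => (hτ.2.2 k hk).le
  calc ENNReal.ofReal (pSum g e q m τ)
      ≤ ENNReal.ofReal (2 ^ e * (pSum g₁ e q m τ + pSum g₂ e q m τ)) :=
        ENNReal.ofReal_le_ofReal (pSum_le_two_rpow_mul_add hg he hmono)
    _ = ENNReal.ofReal (2 ^ e) *
          (ENNReal.ofReal (pSum g₁ e q m τ) + ENNReal.ofReal (pSum g₂ e q m τ)) := by
        rw [ENNReal.ofReal_mul (by positivity),
          ENNReal.ofReal_add (pSum_nonneg hmono) (pSum_nonneg hmono)]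
    _ ≤ _ := by gcongr <;> exact ofReal_pSum_le_pCtrl hτ

lemma pCtrl_mul_le_rpow {α : ℝ} (hα : 1 ≤ α) :
    pCtrl g (e * α) (q * α) s t ≤ pCtrl g e q s t ^ α := by
  refine iSup₂_le fun m τ => iSup_le fun hτ => ?_
  have hmono : ∀ k < m, τ k ≤ τ (k + 1) := fun k hk => (hτ.2.2 k hk).le
  calc ENNReal.ofReal (pSum g (e * α) (q * α) m τ)
      ≤ ENNReal.ofReal (pSum g e q m τ ^ α) :=
        ENNReal.ofReal_le_ofReal (pSum_mul_le_rpow hα hmono)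
    _ = ENNReal.ofReal (pSum g e q m τ) ^ α :=
        (ENNReal.ofReal_rpow_of_nonneg (pSum_nonneg hmono) (by linarith)).symm
    _ ≤ _ := by gcongr; exact ofReal_pSum_le_pCtrl hτ

end Controls

theorem ctrl_sum_of_paths_general {V : Type*} [NormedAddCommGroup V]
    (X h : ℝ → V) (γ γ' p T : ℝ)
    (hpγ : p < γ) (hγγ' : γ < γ') :
    ∃ C : ℝ, 0 < C ∧ ∀ s t : ℝ, 0 ≤ s → s ≤ t → t ≤ T →
      pCtrl (fun u v => ‖(X v + h v) - (X u + h u)‖) (1 / (γ - p)) (p / (γ - p)) s t ≤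
        ENNReal.ofReal C *
          (pCtrl (fun u v => ‖X v - X u‖) (1 / (γ - p)) (p / (γ - p)) s t +
            (pCtrl (fun u v => ‖h v - h u‖) (1 / (γ' - p)) (p / (γ' - p)) s t) ^
              ((γ' - p) / (γ - p))) := by
  have hγp : 0 < γ - p := by linarith
  have hα : 1 ≤ (γ' - p) / (γ - p) := (one_le_div hγp).mpr (by linarith)
  have he : 1 / (γ - p) = 1 / (γ' - p) * ((γ' - p) / (γ - p)) := by
    field_simp [(by linarith : γ' - p ≠ 0)]
  have hq : p / (γ - p) = p / (γ' - p) * ((γ' - p) / (γ - p)) := by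
    field_simp [(by linarith : γ' - p ≠ 0)]
  have htri : ∀ u v, |‖(X v + h v) - (X u + h u)‖| ≤ |‖X v - X u‖| + |‖h v - h u‖| := by
    intro u v
    simp only [abs_norm]
    rw [add_sub_add_comm]
    exact norm_add_le _ _
  refine ⟨2 ^ (1 / (γ - p)), by positivity, fun s t _ _ _ => ?_⟩
  refine (pCtrl_le_two_rpow_mul_add htri (by positivity)).trans ?_
  gcongr
  rw [he, hq]
  exact pCtrl_mul_le_rpow hα

/-- First-level control of a sum of paths: for `0 ≤ p < γ < γ'` with `γ + γ' > 1`,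
if `X` is `γ`-regular and `h` is `γ'`-regular (finite partition controls on `[0,T]`),
then `W_{X+h,γ,p}(s,t) ≲ W_{X,γ,p}(s,t) + W_{h,γ',p}(s,t)^{(γ'-p)/(γ-p)}` on every
subinterval `[s,t] ⊆ [0,T]`. -/
theorem ctrl_sum_of_paths {V : Type*} [NormedAddCommGroup V]
    (X h : ℝ → V) (γ γ' p T : ℝ)
    (hp0 : 0 ≤ p) (hpγ : p < γ) (hγγ' : γ < γ') (hyoung : 1 < γ + γ')
    (hXfin : pCtrl (fun u v => ‖X v - X u‖) (1 / (γ - p)) (p / (γ - p)) 0 T ≠ ⊤)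
    (hhfin : pCtrl (fun u v => ‖h v - h u‖) (1 / (γ' - p)) (p / (γ' - p)) 0 T ≠ ⊤) :
    ∃ C : ℝ, 0 < C ∧ ∀ s t : ℝ, 0 ≤ s → s ≤ t → t ≤ T →
      pCtrl (fun u v => ‖(X v + h v) - (X u + h u)‖) (1 / (γ - p)) (p / (γ - p)) s t ≤
        ENNReal.ofReal C *
          (pCtrl (fun u v => ‖X v - X u‖) (1 / (γ - p)) (p / (γ - p)) s t +
            (pCtrl (fun u v => ‖h v - h u‖) (1 / (γ' - p)) (p / (γ' - p)) s t) ^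
              ((γ' - p) / (γ - p))) :=
  ctrl_sum_of_paths_general X h γ γ' p T hpγ hγγ'
end

section
/- Let X, h be paths with iterated integrals forming level-2 objects, where the mixed second-level objects satisfy Chen-type relations. Then for τ_1 < τ_2 < τ_3 and the local approximation Ξ^{τ_1,τ_3} := ∑_{0 ≤ j < N} U_{t,τ_1} ξ^j_{τ_1} ∘ (Π^{j+1}(X))_{τ_1,τ_3}, we have the algebraic identity Ξ^{τ_1,τ_2} + Ξ^{τ_2,τ_3} − Ξ^{τ_1,τ_3} = ∑_{0 ≤ j < N} U_{t,τ_1} R^{j,N}_{τ_1,τ_2} ∘ (Π^{j+1}(X))_{τ_2,τ_3} + ∑_{0 ≤ j < N} (U_{t,τ_2} − U_{t,τ_1}) ξ^j_{τ_2} ∘ (Π^{j+1}(X))_{τ_2,τ_3}. -/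
lemma sum_split {M : Type*} [AddCommMonoid M] {d a b n : ℕ} (h : a + b = n)
    (F : (Fin n → Fin d) → M) :
    ∑ w : Fin n → Fin d, F w
      = ∑ w1 : Fin a → Fin d, ∑ w2 : Fin b → Fin d,
          F (fun k => if hk : k.1 < a then w1 ⟨k.1, hk⟩
              else w2 ⟨k.1 - a, by have := k.2; omega⟩) := by
  have e0 : ((Fin a → Fin d) × (Fin b → Fin d)) → (Fin n → Fin d) := fun p k =>
    if hk : k.1 < a then p.1 ⟨k.1, hk⟩ else p.2 ⟨k.1 - a, by have := k.2; omega⟩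
  have e := Fintype.sum_prod_type (fun p : (Fin a → Fin d) × (Fin b → Fin d) =>
      F (fun k : Fin n => if hk : k.1 < a then p.1 ⟨k.1, hk⟩
        else p.2 ⟨k.1 - a, by have := k.2; omega⟩))
  refine Eq.trans ?_ e
  refine ((Fintype.sum_bijective
    (fun p : (Fin a → Fin d) × (Fin b → Fin d) =>
      (fun k : Fin n => if hk : k.1 < a then p.1 ⟨k.1, hk⟩
        else p.2 ⟨k.1 - a, by have := k.2; omega⟩))
    ?_
    (fun p : (Fin a → Fin d) × (Fin b → Fin d) =>
      F (fun k : Fin n => if hk : k.1 < a then p.1 ⟨k.1, hk⟩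
        else p.2 ⟨k.1 - a, by have := k.2; omega⟩))
    F (fun p => rfl)).symm)
  refine Function.bijective_iff_has_inverse.mpr
    ⟨fun w => (fun k => w ⟨k.1, by omega⟩, fun k => w ⟨a + k.1, by omega⟩), ?_, ?_⟩
  · intro p
    refine Prod.ext ?_ ?_
    · funext k
      simp only
      rw [dif_pos (show k.1 < a from k.2)]
    · funext k
      simp only
      rw [dif_neg (by omega)]
      exact congrArg p.2 (Fin.ext (show a + k.1 - a = k.1 by omega))
  · intro w
    funext k
    by_cases hk : k.1 < a
    · simp only [dif_pos hk]
    · simp only [dif_neg hk]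
      exact congrArg w (Fin.ext (show a + (k.1 - a) = k.1 by omega))

lemma sum_fin_split {M : Type*} [AddCommMonoid M] (n : ℕ) (f : Fin (n + 2) → M) :
    ∑ i, f i = f 0 + f (Fin.last (n + 1)) + ∑ i : Fin n, f (i.succ.castSucc) := by
  rw [Fin.sum_univ_castSucc, Fin.sum_univ_succ]
  simp only [Fin.castSucc_zero]
  abel

lemma fin_sum_to_range {M : Type*} [AddCommMonoid M] (n : ℕ) (f : Fin n → M) (g : ℕ → M)
    (h : ∀ i : Fin n, f i = g i.1) : ∑ i : Fin n, f i = ∑ i ∈ Finset.range n, g i :=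
  (Finset.sum_congr rfl fun i _ => h i).trans (Fin.sum_univ_eq_sum_range g n)

lemma sum_cast {M : Type*} [AddCommMonoid M] {d a b : ℕ} (h : a = b)
    (F : (Fin a → Fin d) → M) (G : (Fin b → Fin d) → M)
    (hFG : ∀ g : Fin b → Fin d, F (fun k => g ⟨k.1, h ▸ k.2⟩) = G g) :
    ∑ f, F f = ∑ g, G g := by
  subst h
  exact Fintype.sum_congr F G fun g => hFG g


/-- Algebraic identity for the local approximation of the rough integral
(Chen's relation for a multiplicative functional, coordinate form).

Here `A j s t : (Fin j → Fin d) → ℝ` are the coordinates of the level-`j`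
component `Π^j(𝐗)_{s,t}` of a multiplicative functional with values in the
truncated tensor algebra `T^N(ℝ^d)`, `ξ j τ : (Fin (j+1) → Fin d) → E` are the
coordinates of the Gubinelli derivatives `ξ^j_τ ∈ L((ℝ^d)^{⊗(j+1)}, E)`,
`U` is a family of linear operators, and `R j s t` the remainders defined by the
controlled-path relation. With
`Ξ^{τ₁,τ₃} = ∑_{0≤j<N} U_{t,τ₁} ξ^j_{τ₁} ∘ (Π^{j+1}𝐗)_{τ₁,τ₃}`, the identity
`Ξ^{τ₁,τ₂} + Ξ^{τ₂,τ₃} − Ξ^{τ₁,τ₃}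
 = ∑_j U_{t,τ₁} R^{j,N}_{τ₁,τ₂} ∘ (Π^{j+1}𝐗)_{τ₂,τ₃}
 + ∑_j (U_{t,τ₂} − U_{t,τ₁}) ξ^j_{τ₂} ∘ (Π^{j+1}𝐗)_{τ₂,τ₃}` holds. -/
theorem local_approximation_identity {E : Type*} [AddCommGroup E] [Module ℝ E]
    (d N : ℕ) (hN : 1 ≤ N)
    (A : (j : ℕ) → ℝ → ℝ → ((Fin j → Fin d) → ℝ))
    (ξ : (j : ℕ) → ℝ → ((Fin (j + 1) → Fin d) → E))
    (R : (j : ℕ) → ℝ → ℝ → ((Fin (j + 1) → Fin d) → E))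
    (U : ℝ → ℝ → E →ₗ[ℝ] E) (t : ℝ)
    -- level zero of the multiplicative functional is `1`
    (hA0 : ∀ (s u : ℝ) (w : Fin 0 → Fin d), A 0 s u w = 1)
    -- Chen's relation for the multiplicative functional, in coordinates
    (hChen : ∀ (j : ℕ) (s u v : ℝ) (w : Fin j → Fin d),
      A j s v w = ∑ i : Fin (j + 1),
        A i.1 s u (fun k => w ⟨k.1, by have := i.2; have := k.2; omega⟩) *
          A (j - i.1) u v (fun k => w ⟨i.1 + k.1, by have := i.2; have := k.2; omega⟩))
    -- defining relation of the remainders `R^{i,N}` of the controlled rough path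
    (hR : ∀ i : ℕ, i < N → ∀ (s u : ℝ) (v : Fin (i + 1) → Fin d),
      ξ i u v - ξ i s v =
        (∑ j ∈ (Finset.Ioo i N).attach,
          ∑ w : Fin (j.1 - i) → Fin d,
            A (j.1 - i) s u w •
              ξ j.1 s (fun k =>
                if hk : k.1 < j.1 - i then w ⟨k.1, hk⟩
                else v ⟨k.1 - (j.1 - i), by
                  have h2 := Finset.mem_Ioo.mp j.2; have h3 := k.2; omega⟩)) +
          R i s u v)
    (τ1 τ2 τ3 : ℝ) (h12 : τ1 < τ2) (h23 : τ2 < τ3) :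
    (∑ j ∈ Finset.range N, ∑ w : Fin (j + 1) → Fin d,
        A (j + 1) τ1 τ2 w • U t τ1 (ξ j τ1 w)) +
      (∑ j ∈ Finset.range N, ∑ w : Fin (j + 1) → Fin d,
        A (j + 1) τ2 τ3 w • U t τ2 (ξ j τ2 w)) -
      (∑ j ∈ Finset.range N, ∑ w : Fin (j + 1) → Fin d,
        A (j + 1) τ1 τ3 w • U t τ1 (ξ j τ1 w)) =
    (∑ j ∈ Finset.range N, ∑ w : Fin (j + 1) → Fin d,
        A (j + 1) τ2 τ3 w • U t τ1 (R j τ1 τ2 w)) +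
      (∑ j ∈ Finset.range N, ∑ w : Fin (j + 1) → Fin d,
        A (j + 1) τ2 τ3 w • (U t τ2 (ξ j τ2 w) - U t τ1 (ξ j τ2 w))) := by
  classical
  -- cast lemma for `A`
  have Acast : ∀ (u v : ℝ) {a b : ℕ} (h : a = b) (f : Fin a → Fin d) (g : Fin b → Fin d),
      (∀ k : Fin a, f k = g ⟨k.1, h ▸ k.2⟩) → A a u v f = A b u v g := by
    intro u v a b h f g hfg
    subst h
    exact congrArg (A a u v) (funext fun k => hfg k)
  -- attach-free version of hR
  have hR' : ∀ i : ℕ, i < N → ∀ v : Fin (i + 1) → Fin d,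
      ξ i τ2 v = ((∑ k ∈ Finset.Ioo i N,
          ∑ w : Fin (k - i) → Fin d,
            A (k - i) τ1 τ2 w •
              ξ k τ1 (fun m =>
                if hm : m.1 < k - i then w ⟨m.1, hm⟩
                else v ⟨m.1 - (k - i), by have := m.2; omega⟩)) + R i τ1 τ2 v)
        + ξ i τ1 v := by
    intro i hi v
    rw [← sub_eq_iff_eq_add, hR i hi τ1 τ2 v]
    congr 1
    exact Finset.sum_attach (Finset.Ioo i N) (fun k =>
      ∑ w : Fin (k - i) → Fin d,
        A (k - i) τ1 τ2 w •
          ξ k τ1 (fun m =>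
            if hm : m.1 < k - i then w ⟨m.1, hm⟩
            else v ⟨m.1 - (k - i), by have := m.2; omega⟩))
  -- pointwise expansion of the τ2-derivative terms
  have hpt : ∀ j, j < N → ∀ w : Fin (j + 1) → Fin d,
      A (j + 1) τ2 τ3 w • U t τ1 (ξ j τ2 w)
        = A (j + 1) τ2 τ3 w • U t τ1 (ξ j τ1 w)
          + (∑ k ∈ Finset.Ioo j N, ∑ w' : Fin (k - j) → Fin d,
              (A (k - j) τ1 τ2 w' * A (j + 1) τ2 τ3 w) •
                U t τ1 (ξ k τ1 (fun m =>
                  if hm : m.1 < k - j then w' ⟨m.1, hm⟩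
                  else w ⟨m.1 - (k - j), by have := m.2; omega⟩)))
          + A (j + 1) τ2 τ3 w • U t τ1 (R j τ1 τ2 w) := by
    intro j hj w
    rw [hR' j hj w]
    simp only [map_add, smul_add, map_sum, map_smul, Finset.smul_sum, smul_smul,
      mul_comm (A (j + 1) τ2 τ3 w)]
    abel
  -- summed version
  have hT2 : (∑ j ∈ Finset.range N, ∑ w : Fin (j + 1) → Fin d,
        A (j + 1) τ2 τ3 w • U t τ1 (ξ j τ2 w))
      = (∑ j ∈ Finset.range N, ∑ w : Fin (j + 1) → Fin d,
          A (j + 1) τ2 τ3 w • U t τ1 (ξ j τ1 w))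
        + (∑ j ∈ Finset.range N, ∑ w : Fin (j + 1) → Fin d,
            ∑ k ∈ Finset.Ioo j N, ∑ w' : Fin (k - j) → Fin d,
              (A (k - j) τ1 τ2 w' * A (j + 1) τ2 τ3 w) •
                U t τ1 (ξ k τ1 (fun m =>
                  if hm : m.1 < k - j then w' ⟨m.1, hm⟩
                  else w ⟨m.1 - (k - j), by have := m.2; omega⟩)))
        + (∑ j ∈ Finset.range N, ∑ w : Fin (j + 1) → Fin d,
            A (j + 1) τ2 τ3 w • U t τ1 (R j τ1 τ2 w)) := by
    rw [← Finset.sum_add_distrib, ← Finset.sum_add_distrib]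
    refine Finset.sum_congr rfl fun j hj => ?_
    rw [← Finset.sum_add_distrib, ← Finset.sum_add_distrib]
    exact Finset.sum_congr rfl fun w _ => hpt j (Finset.mem_range.mp hj) w
  -- Chen's relation in normalized form
  have hChen' : ∀ (j : ℕ) (w : Fin (j + 1) → Fin d),
      A (j + 1) τ1 τ3 w = A (j + 1) τ2 τ3 w + A (j + 1) τ1 τ2 w
        + ∑ i ∈ Finset.range j,
            A (i + 1) τ1 τ2 (fun k : Fin (i + 1) => w ⟨min k.1 j, by omega⟩)
              * A (j - i) τ2 τ3 (fun k : Fin (j - i) => w ⟨min (i + 1 + k.1) j, by omega⟩) := by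
    intro j w
    rw [hChen (j + 1) τ1 τ2 τ3 w, sum_fin_split]
    congr 1
    congr 1
    · -- i = 0
      have h0 : ((0 : Fin (j + 2)).1) = 0 := Fin.val_zero _
      have e1 : ∀ f1 : Fin ((0 : Fin (j + 2)).1) → Fin d, A ((0 : Fin (j + 2)).1) τ1 τ2 f1 = 1 :=
        fun f1 => (Acast τ1 τ2 h0 f1 Fin.elim0
          (fun k => absurd k.2 (by omega))).trans (hA0 τ1 τ2 _)
      rw [e1, one_mul]
      exact Acast τ2 τ3 (by omega) _ w
        (fun k => congrArg w (Fin.ext (show (0 : Fin (j + 2)).1 + k.1 = k.1 by omega)))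
    · -- i = last
      have hlv : ((Fin.last (j + 1)).1) = j + 1 := Fin.val_last _
      have e2 : ∀ f2 : Fin (j + 1 - (Fin.last (j + 1)).1) → Fin d,
          A (j + 1 - (Fin.last (j + 1)).1) τ2 τ3 f2 = 1 :=
        fun f2 => (Acast τ2 τ3 (by omega) f2 Fin.elim0
          (fun k => absurd k.2 (by omega))).trans (hA0 τ2 τ3 _)
      rw [e2, mul_one]
      exact Acast τ1 τ2 (by omega) _ w (fun k => congrArg w (Fin.ext rfl))
    · -- middle terms
      refine fin_sum_to_range j _
        (fun i => A (i + 1) τ1 τ2 (fun k : Fin (i + 1) => w ⟨min k.1 j, by omega⟩)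
          * A (j - i) τ2 τ3 (fun k : Fin (j - i) => w ⟨min (i + 1 + k.1) j, by omega⟩))
        fun i => ?_
      have hcv : ((i.succ.castSucc).1) = i.1 + 1 := by simp
      have hi2 := i.2
      congr 1
      · exact Acast τ1 τ2 (by omega) _ _
          (fun k => congrArg w (Fin.ext (show k.1 = min k.1 j by have := k.2; omega)))
      · exact Acast τ2 τ3 (by omega) _ _
          (fun k => congrArg w (Fin.ext
            (show (i.succ.castSucc).1 + k.1 = min (i.1 + 1 + k.1) j by have := k.2; omega)))
  -- expansion of the τ1→τ3 sum via Chen's relation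
  have hS13 : (∑ j ∈ Finset.range N, ∑ w : Fin (j + 1) → Fin d,
        A (j + 1) τ1 τ3 w • U t τ1 (ξ j τ1 w))
      = (∑ j ∈ Finset.range N, ∑ w : Fin (j + 1) → Fin d,
          A (j + 1) τ2 τ3 w • U t τ1 (ξ j τ1 w))
        + (∑ j ∈ Finset.range N, ∑ w : Fin (j + 1) → Fin d,
            A (j + 1) τ1 τ2 w • U t τ1 (ξ j τ1 w))
        + (∑ j ∈ Finset.range N, ∑ w : Fin (j + 1) → Fin d,
            ∑ i ∈ Finset.range j,
              (A (i + 1) τ1 τ2 (fun k : Fin (i + 1) => w ⟨min k.1 j, by omega⟩)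
                * A (j - i) τ2 τ3 (fun k : Fin (j - i) => w ⟨min (i + 1 + k.1) j, by omega⟩)) •
                U t τ1 (ξ j τ1 w)) := by
    rw [← Finset.sum_add_distrib, ← Finset.sum_add_distrib]
    refine Finset.sum_congr rfl fun j _ => ?_
    rw [← Finset.sum_add_distrib, ← Finset.sum_add_distrib]
    refine Finset.sum_congr rfl fun w _ => ?_
    rw [hChen' j w, add_smul, add_smul, Finset.sum_smul]
  -- the "middle" sum in normalized (split) form
  have hL : (∑ j ∈ Finset.range N, ∑ w : Fin (j + 1) → Fin d,
        ∑ i ∈ Finset.range j,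
          (A (i + 1) τ1 τ2 (fun k : Fin (i + 1) => w ⟨min k.1 j, by omega⟩)
            * A (j - i) τ2 τ3 (fun k : Fin (j - i) => w ⟨min (i + 1 + k.1) j, by omega⟩)) •
            U t τ1 (ξ j τ1 w))
      = ∑ j ∈ Finset.range N, ∑ i ∈ Finset.range j,
          ∑ w1 : Fin (i + 1) → Fin d, ∑ w2 : Fin (j - i) → Fin d,
            (A (i + 1) τ1 τ2 w1 * A (j - i) τ2 τ3 w2) •
              U t τ1 (ξ j τ1 (fun m : Fin (j + 1) =>
                if hm : m.1 < i + 1 then w1 ⟨m.1, hm⟩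
                else w2 ⟨m.1 - (i + 1), by have := m.2; omega⟩)) := by
    refine Finset.sum_congr rfl fun j _ => ?_
    rw [Finset.sum_comm]
    refine Finset.sum_congr rfl fun i hi => ?_
    have hij := Finset.mem_range.mp hi
    rw [sum_split (show i + 1 + (j - i) = j + 1 by omega)]
    refine Finset.sum_congr rfl fun w1 _ => Finset.sum_congr rfl fun w2 _ => ?_
    congr 1
    · congr 1
      · refine Acast τ1 τ2 rfl _ w1 fun k => ?_
        have hk := k.2
        simp only []
        rw [dif_pos (show min k.1 j < i + 1 by omega)]
        exact congrArg w1 (Fin.ext (show min k.1 j = k.1 by omega))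
      · refine Acast τ2 τ3 rfl _ w2 fun k => ?_
        have hk := k.2
        simp only []
        rw [dif_neg (show ¬ min (i + 1 + k.1) j < i + 1 by omega)]
        exact congrArg w2 (Fin.ext (show min (i + 1 + k.1) j - (i + 1) = k.1 by omega))
  -- the "cross" sum also equals the normalized form
  have hRc : (∑ j ∈ Finset.range N, ∑ w : Fin (j + 1) → Fin d,
        ∑ k ∈ Finset.Ioo j N, ∑ w' : Fin (k - j) → Fin d,
          (A (k - j) τ1 τ2 w' * A (j + 1) τ2 τ3 w) •
            U t τ1 (ξ k τ1 (fun m =>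
              if hm : m.1 < k - j then w' ⟨m.1, hm⟩
              else w ⟨m.1 - (k - j), by have := m.2; omega⟩)))
      = ∑ j ∈ Finset.range N, ∑ i ∈ Finset.range j,
          ∑ w1 : Fin (i + 1) → Fin d, ∑ w2 : Fin (j - i) → Fin d,
            (A (i + 1) τ1 τ2 w1 * A (j - i) τ2 τ3 w2) •
              U t τ1 (ξ j τ1 (fun m : Fin (j + 1) =>
                if hm : m.1 < i + 1 then w1 ⟨m.1, hm⟩
                else w2 ⟨m.1 - (i + 1), by have := m.2; omega⟩)) := by
    calc (∑ j ∈ Finset.range N, ∑ w : Fin (j + 1) → Fin d,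
        ∑ k ∈ Finset.Ioo j N, ∑ w' : Fin (k - j) → Fin d,
          (A (k - j) τ1 τ2 w' * A (j + 1) τ2 τ3 w) •
            U t τ1 (ξ k τ1 (fun m =>
              if hm : m.1 < k - j then w' ⟨m.1, hm⟩
              else w ⟨m.1 - (k - j), by have := m.2; omega⟩)))
        = ∑ j ∈ Finset.range N, ∑ k ∈ Finset.Ioo j N, ∑ w : Fin (j + 1) → Fin d,
            ∑ w' : Fin (k - j) → Fin d,
            (A (k - j) τ1 τ2 w' * A (j + 1) τ2 τ3 w) •
              U t τ1 (ξ k τ1 (fun m =>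
                if hm : m.1 < k - j then w' ⟨m.1, hm⟩
                else w ⟨m.1 - (k - j), by have := m.2; omega⟩)) :=
          Finset.sum_congr rfl fun j _ => Finset.sum_comm
      _ = ∑ jj ∈ Finset.range N, ∑ p ∈ Finset.range jj, ∑ w : Fin (p + 1) → Fin d,
            ∑ w' : Fin (jj - p) → Fin d,
            (A (jj - p) τ1 τ2 w' * A (p + 1) τ2 τ3 w) •
              U t τ1 (ξ jj τ1 (fun m =>
                if hm : m.1 < jj - p then w' ⟨m.1, hm⟩
                else w ⟨m.1 - (jj - p), by have := m.2; omega⟩)) :=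
          Finset.sum_comm' (fun j k => by
            simp only [Finset.mem_range, Finset.mem_Ioo]; omega)
      _ = _ := by
          refine Finset.sum_congr rfl fun j hj => ?_
          rw [← Finset.sum_range_reflect]
          refine Finset.sum_congr rfl fun i hi => ?_
          have hij := Finset.mem_range.mp hi
          rw [Finset.sum_comm]
          refine sum_cast (show j - (j - 1 - i) = i + 1 by omega) _ _ fun w1 => ?_
          refine sum_cast (show j - 1 - i + 1 = j - i by omega) _ _ fun w2 => ?_
          congr 1
          · congr 1
            · exact Acast τ1 τ2 (by omega) _ w1 fun k => rfl
            · exact Acast τ2 τ3 (by omega) _ w2 fun k => rfl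
          · refine congrArg (U t τ1) (congrArg (ξ j τ1) (funext fun m => ?_))
            by_cases hm : m.1 < i + 1
            · rw [dif_pos (show m.1 < j - (j - 1 - i) by omega), dif_pos hm]
            · rw [dif_neg (show ¬ m.1 < j - (j - 1 - i) by omega), dif_neg hm]
              exact congrArg w2 (Fin.ext
                (show m.1 - (j - (j - 1 - i)) = m.1 - (i + 1) by omega))
  -- final assembly
  have hSD : (∑ j ∈ Finset.range N, ∑ w : Fin (j + 1) → Fin d,
        A (j + 1) τ2 τ3 w • (U t τ2 (ξ j τ2 w) - U t τ1 (ξ j τ2 w)))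
      = (∑ j ∈ Finset.range N, ∑ w : Fin (j + 1) → Fin d,
          A (j + 1) τ2 τ3 w • U t τ2 (ξ j τ2 w))
        - (∑ j ∈ Finset.range N, ∑ w : Fin (j + 1) → Fin d,
            A (j + 1) τ2 τ3 w • U t τ1 (ξ j τ2 w)) := by
    simp only [smul_sub, Finset.sum_sub_distrib]
  rw [hSD, hT2, hS13, hL, hRc]
  abel
end

section
/- Let W_X and W_h be continuous superadditive control functions on [s,t] and C ≥ 1 a constant, and suppose that for each consecutive pair of greedy points τ_{m-1}, τ_m (at threshold χ̃ := 2C·W'(s,t)) one has χ̃ ≤ C(W'(τ_{m-1},τ_m) + W_h(τ_{m-1},τ_m)) with W'(τ_{m-1},τ_m) ≤ χ̃/(2C). Then W'(s,t) ≤ W_h(τ_{m-1},τ_m) for every such m, and summing using superadditivity of W_h gives (N − 1)·W'(s,t) ≤ W_h(s,t), where N is the number of greedy steps at threshold χ̃. -/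
/-- Key combinatorial step of the Cass–Litterer–Lyons argument: let `w = W'(s,t) ≥ 0`,
let `τ₀ = s ≤ τ₁ ≤ … ≤ τ_n = t` be the greedy points at threshold `χ̃ = 2C·w`, and
suppose on each greedy interval `χ̃ ≤ C(W'(τ_{m-1},τ_m) + W_h(τ_{m-1},τ_m))` with
`W'(τ_{m-1},τ_m) ≤ χ̃/(2C)`. Then `w ≤ W_h(τ_{m-1},τ_m)` for every such `m`, and
summing via superadditivity of `W_h` gives `(n − 1)·w ≤ W_h(s,t)`. -/
theorem greedy_accumulation (W' Wh : ℝ → ℝ → ℝ) (s t : ℝ) (C : ℝ) (τ : ℕ → ℝ) (n : ℕ)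
    (hst : s ≤ t) (hC : 1 ≤ C) (hn : 1 ≤ n)
    (hτ0 : τ 0 = s) (hτn : τ n = t)
    (hτmono : ∀ m, m < n → τ m ≤ τ (m + 1))
    (hwnn : 0 ≤ W' s t)
    (hWhnn : ∀ x y, s ≤ x → x ≤ y → y ≤ t → 0 ≤ Wh x y)
    (hWhsuper : ∀ x y z, s ≤ x → x ≤ y → y ≤ z → z ≤ t → Wh x y + Wh y z ≤ Wh x z)
    (hpair : ∀ m, 1 ≤ m → m ≤ n - 1 →
      2 * C * W' s t ≤ C * (W' (τ (m - 1)) (τ m) + Wh (τ (m - 1)) (τ m)) ∧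
        W' (τ (m - 1)) (τ m) ≤ (2 * C * W' s t) / (2 * C)) :
    (∀ m, 1 ≤ m → m ≤ n - 1 → W' s t ≤ Wh (τ (m - 1)) (τ m)) ∧
      ((n : ℝ) - 1) * W' s t ≤ Wh s t := by
  have hCpos : (0:ℝ) < C := lt_of_lt_of_le one_pos hC
  -- monotonicity of τ up to n
  have hmono : ∀ i j, i ≤ j → j ≤ n → τ i ≤ τ j := by
    intro i j hij hjn
    induction j with
    | zero => simpa [Nat.le_zero.mp hij]
    | succ k ih =>
      rcases Nat.lt_or_ge i (k+1) with h | h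
      · exact le_trans (ih (Nat.lt_succ_iff.mp h) (le_trans (Nat.le_succ k) hjn))
          (hτmono k (Nat.lt_of_succ_le hjn))
      · have : i = k + 1 := le_antisymm hij h
        simp [this]
  have hsle : ∀ m, m ≤ n → s ≤ τ m := fun m hm => hτ0 ▸ hmono 0 m (Nat.zero_le m) hm
  have hlet : ∀ m, m ≤ n → τ m ≤ t := fun m hm => hτn ▸ hmono m n hm le_rfl
  have key : ∀ m, 1 ≤ m → m ≤ n - 1 → W' s t ≤ Wh (τ (m - 1)) (τ m) := by
    intro m h1 h2
    obtain ⟨ha, hb⟩ := hpair m h1 h2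
    have hb' : W' (τ (m-1)) (τ m) ≤ W' s t := by
      have heq : 2 * C * W' s t / (2 * C) = W' s t := by
        field_simp
      rwa [heq] at hb
    nlinarith [ha, hb', hCpos]
  refine ⟨key, ?_⟩
  -- induction: k * w ≤ Wh s (τ k) for k ≤ n - 1
  have main : ∀ k, k ≤ n - 1 → (k : ℝ) * W' s t ≤ Wh s (τ k) := by
    intro k hk
    induction k with
    | zero =>
      simpa [hτ0] using hWhnn s s le_rfl le_rfl hst
    | succ j ih =>
      have hjn : j ≤ n - 1 := le_trans (Nat.le_succ j) hk
      have hkn : j + 1 ≤ n := by omega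
      have hjn' : j ≤ n := by omega
      have h1 := ih hjn
      have h2 : W' s t ≤ Wh (τ j) (τ (j+1)) := by
        have := key (j+1) (by omega) hk
        simpa using this
      have h3 := hWhsuper s (τ j) (τ (j+1)) le_rfl (hsle j hjn')
        (hmono j (j+1) (Nat.le_succ j) hkn) (hlet (j+1) hkn)
      push_cast
      linarith
  rcases Nat.eq_or_lt_of_le hn with h | h
  · have : (n:ℝ) - 1 = 0 := by rw [← h]; norm_num
    rw [this, zero_mul]
    exact hWhnn s t le_rfl hst le_rfl
  · have hn1 : n - 1 ≤ n - 1 := le_rfl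
    have h1 := main (n-1) hn1
    have hn1n : n - 1 ≤ n := Nat.sub_le n 1
    have h2 := hWhsuper s (τ (n-1)) t le_rfl (hsle _ hn1n) (hτn ▸ hmono (n-1) n hn1n le_rfl) le_rfl
    have h3 := hWhnn (τ (n-1)) t (hsle _ hn1n) (hτn ▸ hmono (n-1) n hn1n le_rfl) le_rfl
    have hcast : ((n - 1 : ℕ) : ℝ) = (n : ℝ) - 1 := by
      have : 1 ≤ n := hn
      push_cast [Nat.cast_sub this]
      ring
    rw [← hcast]
    linarith
end
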